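/- Let G be a connected graph on n vertices with diameter d_g. Then the algebraic connectivity (second-smallest Laplacian eigenvalue) satisfies λ_2(G) ≥ 1/(n d_g). -/
import Mathlib

open Finset Matrix

/-- Telescoping Cauchy–Schwarz along a walk. -/
lemma tele_walk {V : Type*} {G : SimpleGraph V} (v : V → ℝ) :
    ∀ {a b : V} (p : G.Walk a b),
      (v a - v b) ^ 2 ≤ (p.length : ℝ) *
        (p.darts.map (fun d => (v d.toProd.1 - v d.toProd.2) ^ 2)).sum := by
  intro a b p
  induction p with
  | nil => simp
  | @cons a c b hadj q ih =>
    have hS : (0:ℝ) ≤ (q.darts.map (fun d => (v d.toProd.1 - v d.toProd.2) ^ 2)).sum := by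
      apply List.sum_nonneg
      intro x hx
      obtain ⟨d, _, rfl⟩ := List.mem_map.1 hx
      positivity
    set S := (q.darts.map (fun d => (v d.toProd.1 - v d.toProd.2) ^ 2)).sum with hSdef
    set L : ℝ := (q.length : ℝ) with hLdef
    have hL : 0 ≤ L := by positivity
    simp only [SimpleGraph.Walk.length_cons, SimpleGraph.Walk.darts_cons, List.map_cons,
      List.sum_cons, Nat.cast_add, Nat.cast_one]
    have hx : (v a - v b) = (v a - v c) + (v c - v b) := by ring
    rcases eq_or_lt_of_le hL with h0 | h0
    · have hy : (v c - v b) ^ 2 ≤ 0 := by nlinarith [ih]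
      have hy0 : v c - v b = 0 := by nlinarith [sq_nonneg (v c - v b)]
      rw [hx, hy0]
      nlinarith [hS]
    · rw [hx]
      nlinarith [sq_nonneg (L * (v a - v c) - (v c - v b)), mul_le_mul_of_nonneg_left ih hL,
        mul_pos h0 h0, hS, ih]

/-- For a connected graph `G` on `n` vertices with diameter `d_g`, the algebraic
connectivity (smallest nonzero Laplacian eigenvalue) satisfies `λ₂ ≥ 1/(n d_g)`. -/
theorem stmt_15 (n : ℕ) (hn : 0 < n) (G : SimpleGraph (Fin n))
    [DecidableRel G.Adj] (hconn : G.Connected)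
    (hherm : (G.lapMatrix ℝ).IsHermitian) (lam2 : ℝ)
    (hlam2 : IsLeast {μ : ℝ | (∃ i, hherm.eigenvalues i = μ) ∧ μ ≠ 0} lam2) :
    1 / ((n : ℝ) * (G.diam : ℝ)) ≤ lam2 := by
  obtain ⟨⟨⟨i, hi⟩, hne⟩, _⟩ := hlam2
  have hpos : 0 ≤ lam2 := hi ▸ (SimpleGraph.posSemidef_lapMatrix ℝ G).eigenvalues_nonneg i
  rcases eq_or_ne G.diam 0 with hd | hd
  · rw [hd]; simpa using hpos
  set v : Fin n → ℝ := ⇑(hherm.eigenvectorBasis i) with hv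
  have hev : G.lapMatrix ℝ *ᵥ v = lam2 • v := by
    rw [hv, ← hi]; exact hherm.mulVec_eigenvectorBasis i
  have hnorm : ∑ j, v j ^ 2 = 1 := by
    have h1 := hherm.eigenvectorBasis.orthonormal.1 i
    have h2 : ‖hherm.eigenvectorBasis i‖ ^ 2 = 1 := by rw [h1]; norm_num
    rw [EuclideanSpace.norm_eq] at h2
    rw [← h2, Real.sq_sqrt (by positivity)]
    simp [hv, sq_abs]
  -- column sums of the Laplacian vanish
  have hcol : ∀ k, ∑ j, G.lapMatrix ℝ j k = 0 := by
    intro k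
    have h1 := congrFun (G.lapMatrix_mulVec_const_eq_zero (R := ℝ)) k
    simp only [Matrix.mulVec, dotProduct, mul_one, Pi.zero_apply] at h1
    calc ∑ j, G.lapMatrix ℝ j k = ∑ j, G.lapMatrix ℝ k j := by
          refine Finset.sum_congr rfl fun j _ => ?_
          have := congrFun (congrFun (G.isSymm_lapMatrix (R := ℝ)) j) k
          simpa [Matrix.transpose_apply] using this.symm
      _ = 0 := h1
  have hsum0 : ∑ j, v j = 0 := by
    have h2 : ∑ j, (G.lapMatrix ℝ *ᵥ v) j = lam2 * ∑ j, v j := by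
      rw [hev]; simp [Finset.mul_sum]
    have h3 : ∑ j, (G.lapMatrix ℝ *ᵥ v) j = 0 := by
      simp only [Matrix.mulVec, dotProduct]
      rw [Finset.sum_comm]
      simp_rw [← Finset.sum_mul]
      simp [fun k => hcol k]
    have := h3 ▸ h2
    exact (mul_eq_zero.1 this.symm).resolve_left hne
  -- vertex with maximal |v|
  obtain ⟨i0, -, hmax⟩ := Finset.exists_max_image (Finset.univ : Finset (Fin n))
    (fun j => v j ^ 2) ⟨⟨0, hn⟩, Finset.mem_univ _⟩
  have hi0 : 1 ≤ (n : ℝ) * v i0 ^ 2 := by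
    calc (1:ℝ) = ∑ j, v j ^ 2 := hnorm.symm
      _ ≤ ∑ _j : Fin n, v i0 ^ 2 := Finset.sum_le_sum fun j _ => hmax j (Finset.mem_univ j)
      _ = (n : ℝ) * v i0 ^ 2 := by simp [Finset.sum_const, mul_comm]
  -- vertex on the "other side"
  have hj0 : ∃ j0, v i0 * v j0 ≤ 0 := by
    by_contra h
    push_neg at h
    have : (0:ℝ) < ∑ j, v i0 * v j :=
      Finset.sum_pos (fun j _ => h j) ⟨⟨0, hn⟩, Finset.mem_univ _⟩
    rw [← Finset.mul_sum, hsum0, mul_zero] at this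
    exact lt_irrefl 0 this
  obtain ⟨j0, hj0⟩ := hj0
  have hkey : v i0 ^ 2 ≤ (v i0 - v j0) ^ 2 := by nlinarith
  -- the quadratic form equals lam2
  have hvv : v ⬝ᵥ v = 1 := by
    simpa [dotProduct, ← sq] using hnorm
  have hQ : v ⬝ᵥ (G.lapMatrix ℝ *ᵥ v) = lam2 := by
    rw [hev, dotProduct_smul, hvv, smul_eq_mul, mul_one]
  have hdbl : (∑ a, ∑ b, if G.Adj a b then (v a - v b) ^ 2 else 0) = 2 * lam2 := by
    have := G.lapMatrix_toLinearMap₂' (R := ℝ) v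
    rw [Matrix.toLinearMap₂'_apply', hQ] at this
    linarith
  -- the Sym2-valued edge energy
  set f : Sym2 (Fin n) → ℝ :=
    Sym2.lift ⟨fun a b => (v a - v b) ^ 2, fun a b => by ring⟩ with hf
  have hfnonneg : ∀ e, 0 ≤ f e := by
    intro e; induction e with | _ a b => simp [hf]; positivity
  -- sum over darts equals double sum
  have hdart : ∑ d : G.Dart, f d.edge = 2 * lam2 := by
    rw [← hdbl, ← Fintype.sum_prod_type', ← Finset.sum_filter]
    refine Finset.sum_bij' (fun d _ => d.toProd)
      (fun x hx => SimpleGraph.Dart.mk x (Finset.mem_filter.1 hx).2) ?_ ?_ ?_ ?_ ?_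
    · intro d _; exact Finset.mem_filter.2 ⟨Finset.mem_univ _, d.adj⟩
    · intro x hx; exact Finset.mem_univ _
    · intro d _; rfl
    · intro x hx; rfl
    · intro d _
      obtain ⟨⟨a, b⟩, hab⟩ := d
      simp [hf, SimpleGraph.Dart.edge]
  -- sum over edges equals lam2
  have hedge : ∑ e ∈ G.edgeFinset, f e = lam2 := by
    have h1 : ∑ e ∈ G.edgeFinset, (∑ d ∈ Finset.univ.filter (fun d : G.Dart => d.edge = e),
        f d.edge) = ∑ d : G.Dart, f d.edge :=
      Finset.sum_fiberwise_of_maps_to (fun d _ => SimpleGraph.mem_edgeFinset.2 d.edge_mem) _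
    have h2 : ∀ e ∈ G.edgeFinset, (∑ d ∈ Finset.univ.filter (fun d : G.Dart => d.edge = e),
        f d.edge) = 2 * f e := by
      intro e he
      rw [Finset.sum_congr rfl (fun d hd => by
        rw [(Finset.mem_filter.1 hd).2]), Finset.sum_const,
        G.dart_edge_fiber_card e (SimpleGraph.mem_edgeFinset.1 he)]
      simp [two_mul]
    rw [Finset.sum_congr rfl h2, ← Finset.mul_sum, hdart] at h1
    linarith
  -- shortest path
  obtain ⟨p, hp⟩ := hconn.exists_walk_length_eq_dist i0 j0
  set q := p.bypass with hqdef
  have hqpath : q.IsPath := p.bypass_isPath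
  have hlen : (q.length : ℝ) ≤ (G.diam : ℝ) := by
    have h1 : q.length ≤ p.length := p.length_bypass_le
    have h2 : G.dist i0 j0 ≤ G.diam :=
      SimpleGraph.dist_le_diam (SimpleGraph.ediam_ne_top_of_diam_ne_zero hd)
    exact_mod_cast h1.trans (hp ▸ h2)
  have htele := tele_walk v q
  have hmapeq : (q.darts.map (fun d => (v d.toProd.1 - v d.toProd.2) ^ 2)) = q.edges.map f := by
    have he : q.edges = q.darts.map SimpleGraph.Dart.edge := rfl
    rw [he, List.map_map]
    refine List.map_congr_left fun d _ => ?_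
    obtain ⟨⟨a, b⟩, hab⟩ := d
    simp [hf, SimpleGraph.Dart.edge]
  rw [hmapeq] at htele
  have hsum_le : (q.edges.map f).sum ≤ ∑ e ∈ G.edgeFinset, f e := by
    rw [← List.sum_toFinset _ hqpath.isTrail.edges_nodup]
    exact Finset.sum_le_sum_of_subset_of_nonneg
      (fun e he => SimpleGraph.mem_edgeFinset.2 (q.edges_subset_edgeSet (List.mem_toFinset.1 he)))
      (fun e _ _ => hfnonneg e)
  have h6 : (v i0 - v j0) ^ 2 ≤ (q.length : ℝ) * lam2 :=
    htele.trans (mul_le_mul_of_nonneg_left (hedge ▸ hsum_le) (by positivity))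
  have h7 : (v i0 - v j0) ^ 2 ≤ (G.diam : ℝ) * lam2 :=
    h6.trans (mul_le_mul_of_nonneg_right hlen hpos)
  have hX : (0:ℝ) < (n : ℝ) * (G.diam : ℝ) := by
    have : 0 < G.diam := Nat.pos_of_ne_zero hd
    positivity
  rw [div_le_iff₀ hX]
  calc (1:ℝ) ≤ (n : ℝ) * v i0 ^ 2 := hi0
    _ ≤ (n : ℝ) * ((G.diam : ℝ) * lam2) :=
        mul_le_mul_of_nonneg_left (hkey.trans h7) (by positivity)
    _ = lam2 * ((n : ℝ) * (G.diam : ℝ)) := by ring
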